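/- Let G be a simple 3-regular graph. Then κ₀(x,y) ≥ 0 for every edge xy of G if and only if G is isomorphic to a prism graph Y_n for some n ≥ 3 or to a Möbius ladder M_k for some k ≥ 2. -/

import Mathlib

open Finset

variable {V : Type*}

/-- The non-normalized graph Laplacian: `Δ f (x) = ∑_{y ∼ x} (f y − f x)`. -/
noncomputable def graphLap (G : SimpleGraph V) [∀ v, Fintype (G.neighborSet v)]
    (f : V → ℝ) (x : V) : ℝ :=
  ∑ y ∈ G.neighborFinset x, (f y - f x)

/-- The Bakry–Émery operator `Γ`: `2Γ(f,g) = Δ(fg) − fΔg − gΔf`. -/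
noncomputable def graphGamma (G : SimpleGraph V) [∀ v, Fintype (G.neighborSet v)]
    (f g : V → ℝ) (x : V) : ℝ :=
  (graphLap G (fun z => f z * g z) x - f x * graphLap G g x - g x * graphLap G f x) / 2

/-- The Bakry–Émery operator `Γ₂`: `2Γ₂(f,g) = ΔΓ(f,g) − Γ(f,Δg) − Γ(Δf,g)`. -/
noncomputable def graphGamma2 (G : SimpleGraph V) [∀ v, Fintype (G.neighborSet v)]
    (f g : V → ℝ) (x : V) : ℝ :=
  (graphLap G (graphGamma G f g) x - graphGamma G f (graphLap G g) x -
    graphGamma G (graphLap G f) g x) / 2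

/-- A vertex `x` satisfies the curvature-dimension inequality `CD(0,∞)` if
`Γ₂(f)(x) ≥ 0` for all `f : V → ℝ`. -/
def SatisfiesCD (G : SimpleGraph V) [∀ v, Fintype (G.neighborSet v)] (x : V) : Prop :=
  ∀ f : V → ℝ, 0 ≤ graphGamma2 G f f x

open Classical in
/-- The idleness-0 probability measure `μ_x^0` at a vertex `x`. -/
noncomputable def muZero (G : SimpleGraph V) [∀ v, Fintype (G.neighborSet v)] (x : V) :
    V → ℝ :=
  fun z => if G.Adj x z then 1 / (G.degree x : ℝ) else 0

/-- The Wasserstein distance `W₁(μ_x^0, μ_y^0)`: the infimum of the transport cost over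
all couplings of `μ_x^0` and `μ_y^0`. -/
noncomputable def Wone (G : SimpleGraph V) [∀ v, Fintype (G.neighborSet v)] (x y : V) : ℝ :=
  sInf {w : ℝ | ∃ π : V → V → ℝ,
    (∀ u v, 0 ≤ π u v) ∧
    (∀ u v, π u v ≠ 0 → G.Adj x u ∧ G.Adj y v) ∧
    (∀ u, ∑ v ∈ G.neighborFinset y, π u v = muZero G x u) ∧
    (∀ v, ∑ u ∈ G.neighborFinset x, π u v = muZero G y v) ∧
    w = ∑ u ∈ G.neighborFinset x, ∑ v ∈ G.neighborFinset y, (G.dist u v : ℝ) * π u v}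

/-- The Ollivier–Ricci curvature with idleness `0`: `κ₀(x,y) = 1 − W₁(μ_x^0, μ_y^0)`. -/
noncomputable def kappaZero (G : SimpleGraph V) [∀ v, Fintype (G.neighborSet v)]
    (x y : V) : ℝ :=
  1 - Wone G x y

/-- The prism graph `Y n` on vertices `ZMod n × Bool`: two `n`-cycles joined by rungs;
equivalently the Cartesian product of the cycle `C_n` with `K₂`. -/
def prismGraph (n : ℕ) : SimpleGraph (ZMod n × Bool) :=
  SimpleGraph.fromRel (fun p q => (p.2 = q.2 ∧ q.1 = p.1 + 1) ∨ (p.1 = q.1 ∧ p.2 ≠ q.2))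

/-- The Möbius ladder `M n` on vertices `ZMod (2n)`: the cycle `C_{2n}` together with
all antipodal edges. -/
def mobiusLadder (n : ℕ) : SimpleGraph (ZMod (2 * n)) :=
  SimpleGraph.fromRel (fun p q => q = p + 1 ∨ q = p + (n : ZMod (2 * n)))

open Classical in
/-- The Laplacian matrix `L = D − A` of a finite graph. -/
noncomputable def lapMat (G : SimpleGraph V) [Fintype V] : Matrix V V ℝ :=
  fun i j =>
    (if i = j then ∑ k : V, (if G.Adj i k then (1 : ℝ) else 0) else 0) -
      (if G.Adj i j then 1 else 0)

/-- `λ₁ G` : the smallest non-zero eigenvalue of the Laplacian matrix of `G`. -/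
noncomputable def lambdaOne (G : SimpleGraph V) [Fintype V] : ℝ :=
  sInf {t : ℝ | t ≠ 0 ∧ ∃ v : V → ℝ, v ≠ 0 ∧ (lapMat G).mulVec v = t • v}

noncomputable instance fintypeNeighborSetOfFinite [Finite V] (G : SimpleGraph V) (v : V) :
    Fintype (G.neighborSet v) := Fintype.ofFinite _

/-!
For a cubic graph, `κ₀(x, y) ≥ 0` holds exactly when the edge `xy` lies on a triangle or a
square. Given a triangle or square `x a b y`, the coupling `y ↦ e`, `a ↦ b`, `c ↦ x` (with `c`,
`e` the remaining neighbours) moves each third of the mass at most one step, so `W₁ ≤ 1`.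
Without one, only the mass sitting at `y` and the mass sent to `x` can move by one step, the
rest has to move by two, so `W₁ ≥ 4/3`.

Prisms and Möbius ladders have every edge on a square. Conversely, let every edge lie on a
triangle or a square. A triangle forces `K₄ = M₂` or `Y₃`. Without triangles, a square is a
ladder with two rungs, which can be regrown into one with three. At an end rung `u₀ v₀` of a
ladder with at least three rungs, the third neighbours `p` of `u₀` and `q` of `v₀` are
adjacent, because the inner ladder vertices already have all their neighbours. Either `p, q`
are new and form a further rung, or they are the far rung, in one order or the other, and the
ladder closes up into a prism or a Möbius ladder. Finiteness stops the growth.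
-/

open SimpleGraph

namespace SimpleGraph

variable {W : Type*} {G : SimpleGraph V} {H : SimpleGraph W}

section Neighbours

variable {x : V} [Fintype (G.neighborSet x)]

lemma eq_or_eq_or_eq_of_adj {a b c : V} (hx : G.degree x = 3) (ha : G.Adj x a)
    (hb : G.Adj x b) (hc : G.Adj x c) (hab : a ≠ b) (hac : a ≠ c) (hbc : b ≠ c) :
    ∀ d, G.Adj x d → d = a ∨ d = b ∨ d = c := by
  classical
  intro d hd
  have hsub : ({a, b, c} : Finset V) ⊆ G.neighborFinset x := by
    simp [insert_subset_iff, ha, hb, hc]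
  have heq := eq_of_subset_of_card_le hsub (by
    rw [card_neighborFinset_eq_degree, hx, card_insert_of_notMem (by simp [hab, hac]),
      card_pair hbc])
  have hd' : d ∈ G.neighborFinset x := (mem_neighborFinset _ _ _).2 hd
  simpa [← heq] using hd'

lemma exists_adj_ne_ne {a b : V} (hx : G.degree x = 3) (ha : G.Adj x a) (hb : G.Adj x b)
    (hab : a ≠ b) :
    ∃ c, G.Adj x c ∧ c ≠ a ∧ c ≠ b ∧ ∀ d, G.Adj x d → d = a ∨ d = b ∨ d = c := by
  classical
  obtain ⟨c, hc, hcab⟩ := exists_mem_notMem_of_card_lt_card (s := {a, b})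
    (t := G.neighborFinset x) (by rw [card_neighborFinset_eq_degree, hx, card_pair hab]; omega)
  simp only [mem_insert, mem_singleton, not_or] at hcab
  rw [mem_neighborFinset] at hc
  exact ⟨c, hc, hcab.1, hcab.2,
    eq_or_eq_or_eq_of_adj hx ha hb hc hab (Ne.symm hcab.1) (Ne.symm hcab.2)⟩

lemma three_le_degree {a b c : V} (ha : G.Adj x a) (hb : G.Adj x b) (hc : G.Adj x c)
    (hab : a ≠ b) (hac : a ≠ c) (hbc : b ≠ c) : 3 ≤ G.degree x := by
  classical
  rw [← card_neighborFinset_eq_degree]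
  calc 3 = ({a, b, c} : Finset V).card := by
        rw [card_insert_of_notMem (by simp [hab, hac]), card_pair hbc]
    _ ≤ _ := card_le_card (by simp [insert_subset_iff, ha, hb, hc])

end Neighbours

lemma not_adj_of_cliqueFree_three (h : G.CliqueFree 3) {a b c : V} (hab : G.Adj a b)
    (hbc : G.Adj b c) : ¬ G.Adj a c := by
  classical
  exact fun hac => h {a, b, c} (is3Clique_triple_iff.2 ⟨hab, hac, hbc⟩)

/-- The edge `xy` lies on a triangle `x a y` (when `a = b`) or on a square `x a b y`. -/
def OnTriangleOrSquare (G : SimpleGraph V) (x y : V) : Prop :=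
  ∃ a b, G.Adj x a ∧ G.Adj y b ∧ a ≠ y ∧ b ≠ x ∧ (a = b ∨ G.Adj a b)

lemma OnTriangleOrSquare.symm {x y : V} (h : G.OnTriangleOrSquare x y) :
    G.OnTriangleOrSquare y x := by
  obtain ⟨a, b, hxa, hyb, hay, hbx, hab⟩ := h
  exact ⟨b, a, hyb, hxa, hbx, hay, hab.imp Eq.symm fun h => h.symm⟩

def EdgesOnTrianglesOrSquares (G : SimpleGraph V) : Prop :=
  ∀ ⦃x y : V⦄, G.Adj x y → G.OnTriangleOrSquare x y

lemma edgesOnTrianglesOrSquares_fromRel {r : V → V → Prop}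
    (h : ∀ x y, x ≠ y → r x y → (fromRel r).OnTriangleOrSquare x y) :
    (fromRel r).EdgesOnTrianglesOrSquares := by
  intro x y hxy
  rw [fromRel_adj] at hxy
  obtain ⟨hne, hxy | hyx⟩ := hxy
  exacts [h x y hne hxy, (h y x hne.symm hyx).symm]

lemma EdgesOnTrianglesOrSquares.of_iso (h : H.EdgesOnTrianglesOrSquares) (e : G ≃g H) :
    G.EdgesOnTrianglesOrSquares := by
  intro x y hxy
  obtain ⟨a, b, ha, hb, hay, hbx, hab⟩ := h (e.map_adj_iff.2 hxy)
  refine ⟨e.symm a, e.symm b, by simpa using e.symm.map_adj_iff.2 ha,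
    by simpa using e.symm.map_adj_iff.2 hb, fun h => hay (by simp [← h]),
    fun h => hbx (by simp [← h]), hab.imp (congrArg e.symm) e.symm.map_adj_iff.2⟩

lemma mem_of_reachable_of_forall_adj {S : Set V} (hS : ∀ a ∈ S, ∀ b, G.Adj a b → b ∈ S)
    {a b : V} (hab : G.Reachable a b) (ha : a ∈ S) : b ∈ S := by
  obtain ⟨w⟩ := hab
  induction w with
  | nil => exact ha
  | cons h _ ih => exact ih (hS _ ha _ h)

/-- Injectivity and the degree bound force `f` to map each neighbourhood onto a
neighbourhood, so its image is closed under adjacency and `f` reflects adjacency. -/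
lemma nonempty_iso_of_injective_of_degree_le [∀ p, Fintype (H.neighborSet p)]
    [∀ v, Fintype (G.neighborSet v)] [Nonempty W] (hG : G.Connected) (f : H →g G)
    (hf : Function.Injective f) (hdeg : ∀ p, G.degree (f p) ≤ H.degree p) :
    Nonempty (G ≃g H) := by
  classical
  have himage : ∀ p, (H.neighborFinset p).image f = G.neighborFinset (f p) := fun p =>
    eq_of_subset_of_card_le
      (fun z hz => by
        obtain ⟨q, hq, rfl⟩ := mem_image.1 hz
        simpa using f.map_adj ((mem_neighborFinset _ _ _).1 hq))
      (by rw [card_image_of_injective _ hf, card_neighborFinset_eq_degree,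
        card_neighborFinset_eq_degree]; exact hdeg p)
  have hnbr : ∀ p v, G.Adj (f p) v → ∃ q, H.Adj p q ∧ f q = v := fun p v h => by
    have : v ∈ (H.neighborFinset p).image f := by rw [himage]; simpa using h
    simpa using this
  have hsurj : Function.Surjective f := by
    obtain ⟨p⟩ := ‹Nonempty W›
    intro v
    refine mem_of_reachable_of_forall_adj (S := Set.range f) ?_ (hG.preconnected (f p) v) ⟨p, rfl⟩
    rintro _ ⟨q, rfl⟩ b hb
    obtain ⟨r, -, rfl⟩ := hnbr q b hb
    exact ⟨r, rfl⟩
  refine ⟨RelIso.symm ⟨Equiv.ofBijective f ⟨hf, hsurj⟩, fun {p q} => ⟨fun h => ?_, f.map_adj⟩⟩⟩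
  obtain ⟨r, hr, hrq⟩ := hnbr p _ h
  rwa [← hf hrq]

lemma adj_val_add_one {N : ℕ} (hN : 2 ≤ N) {w : ℕ → V}
    (hw : ∀ j, j + 1 < N → G.Adj (w j) (w (j + 1))) (hclose : G.Adj (w (N - 1)) (w 0))
    (i : ZMod N) : G.Adj (w i.val) (w (i + 1).val) := by
  have : NeZero N := ⟨by omega⟩
  have : Fact (1 < N) := ⟨by omega⟩
  have hi := ZMod.val_lt i
  rw [ZMod.val_add, ZMod.val_one]
  by_cases h : i.val + 1 < N
  · rw [Nat.mod_eq_of_lt h]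
    exact hw _ h
  · rw [show i.val = N - 1 by omega, Nat.sub_add_cancel (by omega), Nat.mod_self]
    exact hclose

end SimpleGraph

/-! ### Transport plans and the curvature of an edge -/

section Transport

variable {G : SimpleGraph V} [∀ v, Fintype (G.neighborSet v)] {x y : V}

/-- The couplings of `μ_x^0` and `μ_y^0` over which `Wone G x y` is the infimum. -/
def IsTransportPlan (G : SimpleGraph V) [∀ v, Fintype (G.neighborSet v)] (x y : V)
    (π : V → V → ℝ) : Prop :=
  (∀ u v, 0 ≤ π u v) ∧
  (∀ u v, π u v ≠ 0 → G.Adj x u ∧ G.Adj y v) ∧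
  (∀ u, ∑ v ∈ G.neighborFinset y, π u v = muZero G x u) ∧
  (∀ v, ∑ u ∈ G.neighborFinset x, π u v = muZero G y v)

noncomputable def transportCost (G : SimpleGraph V) [∀ v, Fintype (G.neighborSet v)]
    (x y : V) (π : V → V → ℝ) : ℝ :=
  ∑ u ∈ G.neighborFinset x, ∑ v ∈ G.neighborFinset y, (G.dist u v : ℝ) * π u v

lemma wone_eq_sInf :
    Wone G x y = sInf (transportCost G x y '' {π | IsTransportPlan G x y π}) := by
  simp only [Wone, IsTransportPlan, transportCost, Set.image, Set.mem_ofPred_eq, and_assoc,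
    eq_comm]

lemma transportCost_nonneg {π : V → V → ℝ} (hπ : IsTransportPlan G x y π) :
    0 ≤ transportCost G x y π :=
  sum_nonneg fun _ _ => sum_nonneg fun _ _ => mul_nonneg (Nat.cast_nonneg _) (hπ.1 _ _)

lemma wone_le_transportCost {π : V → V → ℝ} (hπ : IsTransportPlan G x y π) :
    Wone G x y ≤ transportCost G x y π := by
  rw [wone_eq_sInf]
  exact csInf_le ⟨0, by rintro _ ⟨σ, hσ, rfl⟩; exact transportCost_nonneg hσ⟩ ⟨π, hπ, rfl⟩

lemma le_wone {c : ℝ} (hne : ∃ π, IsTransportPlan G x y π)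
    (h : ∀ π, IsTransportPlan G x y π → c ≤ transportCost G x y π) : c ≤ Wone G x y := by
  rw [wone_eq_sInf]
  obtain ⟨π, hπ⟩ := hne
  exact le_csInf ⟨_, π, hπ, rfl⟩ (by rintro _ ⟨σ, hσ, rfl⟩; exact h σ hσ)

lemma muZero_of_adj {u : V} (h : G.Adj x u) : muZero G x u = 1 / G.degree x := by
  simp [muZero, h]

lemma muZero_of_not_adj {u : V} (h : ¬ G.Adj x u) : muZero G x u = 0 := by
  simp [muZero, h]

lemma muZero_nonneg (u : V) : 0 ≤ muZero G x u := by
  unfold muZero; split <;> positivity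

lemma sum_muZero (hx : G.degree x ≠ 0) : ∑ u ∈ G.neighborFinset x, muZero G x u = 1 := by
  rw [sum_congr rfl fun u hu => muZero_of_adj ((mem_neighborFinset _ _ _).1 hu), sum_const,
    card_neighborFinset_eq_degree, nsmul_eq_mul]
  field_simp

lemma isTransportPlan_prod (hx : G.degree x ≠ 0) (hy : G.degree y ≠ 0) :
    IsTransportPlan G x y fun u v => muZero G x u * muZero G y v := by
  refine ⟨fun u v => mul_nonneg (muZero_nonneg u) (muZero_nonneg v), fun u v h => ⟨?_, ?_⟩,
    fun u => by rw [← mul_sum, sum_muZero hy, mul_one],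
    fun v => by rw [← sum_mul, sum_muZero hx, one_mul]⟩ <;>
  · by_contra hadj
    simp [muZero_of_not_adj hadj] at h

lemma wone_le_of_bijOn {σ : V → V} (hσ : Set.BijOn σ (G.neighborSet x) (G.neighborSet y)) :
    Wone G x y ≤ (∑ u ∈ G.neighborFinset x, (G.dist u (σ u) : ℝ)) / G.degree x := by
  classical
  have hdeg : G.degree x = G.degree y := by
    rw [← card_neighborFinset_eq_degree, ← card_neighborFinset_eq_degree]
    exact card_nbij σ (by simpa [Set.MapsTo] using hσ.mapsTo) (by simpa using hσ.injOn)
      (by simpa using hσ.surjOn)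
  set π : V → V → ℝ := fun u v => if G.Adj x u ∧ v = σ u then 1 / G.degree x else 0
  have hrow : ∀ u, ∑ v ∈ G.neighborFinset y, π u v = muZero G x u := by
    intro u
    by_cases hu : G.Adj x u
    · simp only [π, hu, true_and]
      rw [sum_ite_eq', if_pos (by simpa using hσ.mapsTo hu), muZero_of_adj hu]
    · simp [π, hu, muZero_of_not_adj hu]
  have hcol : ∀ v, ∑ u ∈ G.neighborFinset x, π u v = muZero G y v := by
    intro v
    have : ∑ u ∈ G.neighborFinset x, π u v =
        ∑ w ∈ G.neighborFinset y, if v = w then 1 / (G.degree x : ℝ) else 0 :=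
      sum_nbij σ (fun u hu => by simpa using hσ.mapsTo (by simpa using hu))
        (by simpa using hσ.injOn) (by simpa using hσ.surjOn)
        (fun u hu => by simp [π, (mem_neighborFinset _ _ _).1 hu])
    rw [this, sum_ite_eq]
    by_cases hv : G.Adj y v
    · simp [hv, muZero_of_adj hv, hdeg]
    · simp [hv, muZero_of_not_adj hv]
  have hπ : IsTransportPlan G x y π := by
    refine ⟨fun u v => by simp only [π]; split <;> positivity, fun u v h => ?_, hrow, hcol⟩
    by_contra hadj
    simp only [π, ne_eq, ite_eq_right_iff, not_forall] at h
    obtain ⟨⟨hu, rfl⟩, -⟩ := h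
    exact hadj ⟨hu, hσ.mapsTo hu⟩
  refine (wone_le_transportCost hπ).trans (le_of_eq ?_)
  rw [transportCost, sum_div]
  refine sum_congr rfl fun u hu => ?_
  have hu' : G.Adj x u := (mem_neighborFinset _ _ _).1 hu
  simp only [π, hu', true_and, mul_ite, mul_zero]
  rw [sum_ite_eq' _ _ (fun v => (G.dist u v : ℝ) * (1 / G.degree x)),
    if_pos (by simpa using hσ.mapsTo hu')]
  ring

lemma two_sub_le_transportCost (hconn : G.Connected) (hxy : G.Adj x y)
    (hno : ¬ G.OnTriangleOrSquare x y) {π : V → V → ℝ} (hπ : IsTransportPlan G x y π) :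
    2 - 1 / G.degree x - 1 / G.degree y ≤ transportCost G x y π := by
  classical
  obtain ⟨hnn, -, hrow, hcol⟩ := hπ
  have hdist : ∀ u ∈ G.neighborFinset x, ∀ v ∈ G.neighborFinset y,
      2 ≤ G.dist u v + (if u = y then 1 else 0) + (if v = x then 1 else 0) := by
    intro u hu v hv
    rw [mem_neighborFinset] at hu hv
    have h1 := fun h : u ≠ v => hconn.pos_dist_of_ne h
    split_ifs with huy hvx hvx
    · omega
    · have := h1 (huy ▸ hv.ne'.symm); omega
    · have := h1 (hvx ▸ hu.ne'); omega
    · exact hconn.one_lt_dist_of_ne_of_not_adj (fun h => hno ⟨u, v, hu, hv, huy, hvx, Or.inl h⟩)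
        (fun h => hno ⟨u, v, hu, hv, huy, hvx, Or.inr h⟩)
  have hx : y ∈ G.neighborFinset x := (mem_neighborFinset _ _ _).2 hxy
  have hy : x ∈ G.neighborFinset y := (mem_neighborFinset _ _ _).2 hxy.symm
  have hmass : ∑ u ∈ G.neighborFinset x, ∑ v ∈ G.neighborFinset y, π u v = 1 := by
    simp only [hrow]
    exact sum_muZero (G.degree_pos_iff_exists_adj x |>.2 ⟨y, hxy⟩).ne'
  have hfromY : ∑ u ∈ G.neighborFinset x, ∑ v ∈ G.neighborFinset y,
      (if u = y then π u v else 0) = 1 / G.degree x := by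
    rw [sum_comm]
    simp only [sum_ite_eq', hx, if_true]
    rw [hrow, muZero_of_adj hxy]
  have htoX : ∑ u ∈ G.neighborFinset x, ∑ v ∈ G.neighborFinset y,
      (if v = x then π u v else 0) = 1 / G.degree y := by
    simp only [sum_ite_eq', hy, if_true]
    rw [hcol, muZero_of_adj hxy.symm]
  calc 2 - 1 / G.degree x - 1 / G.degree y
      = ∑ u ∈ G.neighborFinset x, ∑ v ∈ G.neighborFinset y,
          (2 * π u v - (if u = y then π u v else 0) - (if v = x then π u v else 0)) := by
        simp only [sum_sub_distrib, ← mul_sum]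
        rw [hmass, hfromY, htoX, mul_one]
    _ ≤ transportCost G x y π := by
        refine sum_le_sum fun u hu => sum_le_sum fun v hv => ?_
        have := mul_le_mul_of_nonneg_right
          (show (2 : ℝ) ≤ G.dist u v + (if u = y then 1 else 0) + (if v = x then 1 else 0) by
            exact_mod_cast hdist u hu v hv) (hnn u v)
        simp only [add_mul, ite_mul, one_mul, zero_mul] at this
        split_ifs at this ⊢ <;> linarith

lemma wone_le_one_of_onTriangleOrSquare (hx : G.degree x = 3) (hy : G.degree y = 3)
    (hxy : G.Adj x y) (h : G.OnTriangleOrSquare x y) : Wone G x y ≤ 1 := by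
  classical
  obtain ⟨a, b, hxa, hyb, hay, hbx, hab⟩ := h
  obtain ⟨c, hxc, hcy, hca, hNx⟩ := exists_adj_ne_ne hx hxy hxa hay.symm
  obtain ⟨e, hye, hex, heb, hNy⟩ := exists_adj_ne_ne hy hxy.symm hyb hbx.symm
  have hyx := hxy.symm
  let σ : V → V := fun u => if u = y then e else if u = a then b else x
  have hσ : Set.BijOn σ (G.neighborSet x) (G.neighborSet y) := by
    refine ⟨fun u hu => ?_, fun u hu w hw huw => ?_, fun w hw => ?_⟩
    · simp only [mem_neighborSet] at hu ⊢
      rcases hNx u hu with rfl | rfl | rfl <;> grind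
    · simp only [mem_neighborSet] at hu hw
      rcases hNx u hu with rfl | rfl | rfl <;> rcases hNx w hw with rfl | rfl | rfl <;> grind
    · simp only [mem_neighborSet] at hw
      rcases hNy w hw with rfl | rfl | rfl
      exacts [⟨c, hxc, by grind⟩, ⟨a, hxa, by grind⟩, ⟨y, hxy, by grind⟩]
  have hstep : ∀ u ∈ G.neighborFinset x, (G.dist u (σ u) : ℝ) ≤ 1 := by
    intro u hu
    rw [mem_neighborFinset] at hu
    have hle : ∀ {p q : V}, p = q ∨ G.Adj p q → (G.dist p q : ℝ) ≤ 1 := by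
      rintro p q (rfl | hpq)
      · simp
      · simp [dist_eq_one_iff_adj.2 hpq]
    rcases hNx u hu with rfl | rfl | rfl
    · exact hle (by simp [σ, hye])
    · exact hle (by simp [σ, hay, hab])
    · exact hle (by simp [σ, hcy, hca, hxc.symm])
  refine (wone_le_of_bijOn hσ).trans ?_
  rw [div_le_one (by simp [hx]), ← card_neighborFinset_eq_degree]
  simpa using sum_le_card_nsmul _ _ 1 hstep

lemma kappaZero_nonneg_iff (hconn : G.Connected) (hG : G.IsRegularOfDegree 3)
    (hxy : G.Adj x y) : 0 ≤ kappaZero G x y ↔ G.OnTriangleOrSquare x y := by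
  unfold kappaZero
  refine ⟨fun h => ?_, fun h => by linarith [wone_le_one_of_onTriangleOrSquare (hG x) (hG y) hxy h]⟩
  by_contra hno
  have hx : G.degree x ≠ 0 := by rw [hG x]; norm_num
  have hy : G.degree y ≠ 0 := by rw [hG y]; norm_num
  have := le_wone ⟨_, isTransportPlan_prod hx hy⟩ fun π hπ =>
    two_sub_le_transportCost hconn hxy hno hπ
  rw [hG x, hG y] at this
  norm_num at this
  linarith

end Transport

/-! ### Prisms and Möbius ladders -/

lemma ZMod.natCast_ne_natCast_of_lt {n a b : ℕ} (ha : a < n) (hb : b < n) (hab : a ≠ b) :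
    (a : ZMod n) ≠ b := by
  rwa [Ne, ZMod.natCast_eq_natCast_iff', Nat.mod_eq_of_lt ha, Nat.mod_eq_of_lt hb]

lemma edgesOnTrianglesOrSquares_prismGraph {n : ℕ} (hn : 2 ≤ n) :
    (prismGraph n).EdgesOnTrianglesOrSquares := by
  have h1 : (1 : ZMod n) ≠ 0 := by
    exact_mod_cast ZMod.natCast_ne_natCast_of_lt (a := 1) (b := 0) hn (by omega) one_ne_zero
  have hs : ∀ i : ZMod n, i + 1 ≠ i := fun i h => h1 (by linear_combination h)
  have hs' : ∀ i : ZMod n, i ≠ i + 1 := fun i h => hs i h.symm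
  refine edgesOnTrianglesOrSquares_fromRel ?_
  rintro ⟨i, b⟩ ⟨j, c⟩ hne (⟨rfl, rfl⟩ | ⟨rfl, hbc⟩)
  · exact ⟨(i, !b), (i + 1, !b), by simp [fromRel_adj, hs, hs']⟩
  · exact ⟨(i + 1, b), (i + 1, c), by simp [fromRel_adj, hs, hs', hbc, Ne.symm hbc]⟩

lemma mobiusLadder_adj_add_one {k : ℕ} (hk : 1 ≤ k) (i : ZMod (2 * k)) :
    (mobiusLadder k).Adj i (i + 1) := by
  have h1 : (1 : ZMod (2 * k)) ≠ 0 := by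
    exact_mod_cast ZMod.natCast_ne_natCast_of_lt (a := 1) (b := 0) (by omega) (by omega) one_ne_zero
  exact (fromRel_adj _ _ _).2 ⟨fun h => h1 (by linear_combination -h), Or.inl (Or.inl rfl)⟩

lemma mobiusLadder_adj_add_self {k : ℕ} (hk : 1 ≤ k) (i : ZMod (2 * k)) :
    (mobiusLadder k).Adj i (i + k) := by
  have hk0 : (k : ZMod (2 * k)) ≠ 0 := by
    exact_mod_cast ZMod.natCast_ne_natCast_of_lt (b := 0) (by omega) (by omega) (by omega)
  exact (fromRel_adj _ _ _).2 ⟨fun h => hk0 (by linear_combination -h), Or.inl (Or.inr rfl)⟩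

lemma edgesOnTrianglesOrSquares_mobiusLadder {k : ℕ} (hk : 2 ≤ k) :
    (mobiusLadder k).EdgesOnTrianglesOrSquares := by
  have hk1 : (k : ZMod (2 * k)) ≠ 1 := by
    exact_mod_cast ZMod.natCast_ne_natCast_of_lt (b := 1) (by omega) (by omega) (by omega)
  have hk1' : (k : ZMod (2 * k)) + 1 ≠ 0 := by
    exact_mod_cast ZMod.natCast_ne_natCast_of_lt (a := k + 1) (b := 0) (by omega) (by omega)
      (by omega)
  have hswap : ∀ i : ZMod (2 * k), i + k + 1 = i + 1 + k := fun i => by ring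
  refine edgesOnTrianglesOrSquares_fromRel ?_
  rintro i j - (rfl | rfl)
  · refine ⟨i + k, i + k + 1, mobiusLadder_adj_add_self (by omega) i, ?_,
      fun h => hk1 (by linear_combination h), fun h => hk1' (by linear_combination h),
      Or.inr (mobiusLadder_adj_add_one (by omega) _)⟩
    rw [hswap]
    exact mobiusLadder_adj_add_self (by omega) _
  · refine ⟨i + 1, i + k + 1, mobiusLadder_adj_add_one (by omega) i,
      mobiusLadder_adj_add_one (by omega) _, fun h => hk1 (by linear_combination -h),
      fun h => hk1' (by linear_combination h), Or.inr ?_⟩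
    rw [hswap]
    exact mobiusLadder_adj_add_self (by omega) _

lemma prismGraph_three_le_degree {n : ℕ} (hn : 3 ≤ n) (p : ZMod n × Bool)
    [Fintype ((prismGraph n).neighborSet p)] : 3 ≤ (prismGraph n).degree p := by
  have h1 : (1 : ZMod n) ≠ 0 := by
    exact_mod_cast ZMod.natCast_ne_natCast_of_lt (a := 1) (b := 0) (by omega) (by omega) one_ne_zero
  have h2 : (2 : ZMod n) ≠ 0 := by
    exact_mod_cast ZMod.natCast_ne_natCast_of_lt (a := 2) (b := 0) (by omega) (by omega) two_ne_zero
  obtain ⟨i, b⟩ := p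
  refine three_le_degree (a := (i + 1, b)) (b := (i - 1, b)) (c := (i, !b)) ?_ ?_ ?_ ?_ ?_ ?_
  · exact (fromRel_adj _ _ _).2
      ⟨fun h => h1 (by linear_combination -congrArg Prod.fst h), by simp⟩
  · exact (fromRel_adj _ _ _).2
      ⟨fun h => h1 (by linear_combination congrArg Prod.fst h), by simp⟩
  · exact (fromRel_adj _ _ _).2 ⟨by simp, by simp⟩
  · intro h
    exact h2 (by linear_combination congrArg Prod.fst h)
  · simp
  · simp

lemma mobiusLadder_three_le_degree {k : ℕ} (hk : 2 ≤ k) (i : ZMod (2 * k))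
    [Fintype ((mobiusLadder k).neighborSet i)] : 3 ≤ (mobiusLadder k).degree i := by
  have h2 : (2 : ZMod (2 * k)) ≠ 0 := by
    exact_mod_cast ZMod.natCast_ne_natCast_of_lt (a := 2) (b := 0) (by omega) (by omega) two_ne_zero
  have hk1 : (k : ZMod (2 * k)) ≠ 1 := by
    exact_mod_cast ZMod.natCast_ne_natCast_of_lt (b := 1) (by omega) (by omega) (by omega)
  have hk1' : (k : ZMod (2 * k)) + 1 ≠ 0 := by
    exact_mod_cast ZMod.natCast_ne_natCast_of_lt (a := k + 1) (b := 0) (by omega) (by omega)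
      (by omega)
  have hprev := mobiusLadder_adj_add_one (by omega) (i - 1)
  rw [sub_add_cancel] at hprev
  exact three_le_degree (mobiusLadder_adj_add_one (by omega) i) hprev.symm
    (mobiusLadder_adj_add_self (by omega) i) (fun h => h2 (by linear_combination h))
    (fun h => hk1 (by linear_combination -h)) (fun h => hk1' (by linear_combination -h))

/-! ### Ladders -/

namespace SimpleGraph

variable {G : SimpleGraph V}

/-- A ladder with rungs `u i v i` for `i ≤ m`. It is grown at the rung `u 0 v 0`, so that the
indices near the growing end involve no subtraction. -/
structure IsLadder (G : SimpleGraph V) (m : ℕ) (u v : ℕ → V) : Prop where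
  rung : ∀ i ≤ m, G.Adj (u i) (v i)
  adj_u : ∀ i < m, G.Adj (u i) (u (i + 1))
  adj_v : ∀ i < m, G.Adj (v i) (v (i + 1))
  injOn_u : Set.InjOn u (Set.Iic m)
  injOn_v : Set.InjOn v (Set.Iic m)
  u_ne_v : ∀ i ≤ m, ∀ j ≤ m, u i ≠ v j

namespace IsLadder

variable {m : ℕ} {u v : ℕ → V}

lemma swap (L : G.IsLadder m u v) : G.IsLadder m v u :=
  ⟨fun i hi => (L.rung i hi).symm, L.adj_v, L.adj_u, L.injOn_v, L.injOn_u,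
    fun i hi j hj h => L.u_ne_v j hj i hi h.symm⟩

lemma u_ne_u (L : G.IsLadder m u v) {i j : ℕ} (hi : i ≤ m) (hj : j ≤ m) (hij : i ≠ j) :
    u i ≠ u j :=
  fun h => hij (L.injOn_u (Set.mem_Iic.2 hi) (Set.mem_Iic.2 hj) h)

lemma v_ne_v (L : G.IsLadder m u v) {i j : ℕ} (hi : i ≤ m) (hj : j ≤ m) (hij : i ≠ j) :
    v i ≠ v j :=
  L.swap.u_ne_u hi hj hij

lemma zero {a b : V} (h : G.Adj a b) : G.IsLadder 0 (fun _ => a) (fun _ => b) :=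
  ⟨fun _ _ => h, fun _ h => absurd h (Nat.not_lt_zero _), fun _ h => absurd h (Nat.not_lt_zero _),
    fun _ _ _ _ _ => by simp_all, fun _ _ _ _ _ => by simp_all, fun _ _ _ _ => h.ne⟩

lemma cons (L : G.IsLadder m u v) {p q : V} (hp : G.Adj p (u 0)) (hq : G.Adj q (v 0))
    (hpq : G.Adj p q) (hpL : ∀ i ≤ m, p ≠ u i ∧ p ≠ v i) (hqL : ∀ i ≤ m, q ≠ u i ∧ q ≠ v i) :
    G.IsLadder (m + 1) (fun | 0 => p | i + 1 => u i) (fun | 0 => q | i + 1 => v i) where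
  rung
    | 0, _ => hpq
    | i + 1, hi => L.rung i (by omega)
  adj_u
    | 0, _ => hp
    | i + 1, hi => L.adj_u i (by omega)
  adj_v
    | 0, _ => hq
    | i + 1, hi => L.adj_v i (by omega)
  injOn_u := by
    rintro (_ | i) hi (_ | j) hj h <;> simp only [Set.mem_Iic] at hi hj h
    · rfl
    · exact absurd h (hpL j (by omega)).1
    · exact absurd h.symm (hpL i (by omega)).1
    · rw [L.injOn_u (Set.mem_Iic.2 (by omega)) (Set.mem_Iic.2 (by omega)) h]
  injOn_v := by
    rintro (_ | i) hi (_ | j) hj h <;> simp only [Set.mem_Iic] at hi hj h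
    · rfl
    · exact absurd h (hqL j (by omega)).2
    · exact absurd h.symm (hqL i (by omega)).2
    · rw [L.injOn_v (Set.mem_Iic.2 (by omega)) (Set.mem_Iic.2 (by omega)) h]
  u_ne_v := by
    rintro (_ | i) hi (_ | j) hj
    · exact hpq.ne
    · exact (hpL j (by omega)).2
    · exact fun h => (hqL i (by omega)).1 h.symm
    · exact L.u_ne_v i (by omega) j (by omega)

lemma card_le [Fintype V] (L : G.IsLadder m u v) : 2 * (m + 1) ≤ Fintype.card V := by
  classical
  have hu := card_image_of_injOn (s := range (m + 1)) (f := u)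
    (fun i hi j hj h => L.injOn_u (by simpa [Nat.lt_succ_iff] using hi)
      (by simpa [Nat.lt_succ_iff] using hj) h)
  have hv := card_image_of_injOn (s := range (m + 1)) (f := v)
    (fun i hi j hj h => L.injOn_v (by simpa [Nat.lt_succ_iff] using hi)
      (by simpa [Nat.lt_succ_iff] using hj) h)
  have hdisj : Disjoint ((range (m + 1)).image u) ((range (m + 1)).image v) := by
    rw [Finset.disjoint_left]
    rintro _ hu hv
    obtain ⟨i, hi, rfl⟩ := mem_image.1 hu
    obtain ⟨j, hj, hji⟩ := mem_image.1 hv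
    exact L.u_ne_v i (by simpa using hi) j (by simpa using hj) hji.symm
  have := card_le_univ ((range (m + 1)).image u ∪ (range (m + 1)).image v)
  rw [card_union_of_disjoint hdisj, hu, hv, card_range] at this
  omega

variable [∀ v, Fintype (G.neighborSet v)]

lemma adj_u_succ (hG : G.IsRegularOfDegree 3) (L : G.IsLadder m u v) {i : ℕ} (hi : i + 2 ≤ m) :
    ∀ d, G.Adj (u (i + 1)) d → d = u i ∨ d = u (i + 2) ∨ d = v (i + 1) :=
  eq_or_eq_or_eq_of_adj (hG _) (L.adj_u i (by omega)).symm (L.adj_u (i + 1) (by omega))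
    (L.rung (i + 1) (by omega)) (L.u_ne_u (by omega) (by omega) (by omega))
    (L.u_ne_v _ (by omega) _ (by omega)) (L.u_ne_v _ (by omega) _ (by omega))

lemma adj_v_succ (hG : G.IsRegularOfDegree 3) (L : G.IsLadder m u v) {i : ℕ} (hi : i + 2 ≤ m) :
    ∀ d, G.Adj (v (i + 1)) d → d = v i ∨ d = v (i + 2) ∨ d = u (i + 1) :=
  L.swap.adj_u_succ hG hi

/-- Every inner vertex of the ladder already has its three neighbours on the ladder. -/
lemma eq_or_eq_or_notMem (hG : G.IsRegularOfDegree 3) (L : G.IsLadder m u v) {p : V}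
    (hp : G.Adj (u 0) p) (hpu : p ≠ u 1) (hpv : p ≠ v 0) :
    p = u m ∨ p = v m ∨ ∀ i ≤ m, p ≠ u i ∧ p ≠ v i := by
  by_contra! h
  obtain ⟨hum, hvm, i, hi, hpi⟩ := h
  rcases i with _ | i
  · exact hpv (hpi (fun h => hp.ne h.symm))
  by_cases hpu' : p = u (i + 1)
  · subst hpu'
    rcases L.adj_u_succ hG (i := i) (by grind) _ hp.symm with h | h | h <;>
      grind [L.u_ne_u, L.u_ne_v]
  · rw [hpi hpu'] at hp
    rcases L.adj_v_succ hG (i := i) (by grind) _ hp.symm with h | h | h <;>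
      grind [L.u_ne_u, L.u_ne_v]

/-- The squares through `u 0 p` and `v 0 q` run along the ladder, where all inner vertices
are saturated, or join `p` and `q`. -/
lemma adj_of_adj_u_zero_of_adj_v_zero (hG : G.IsRegularOfDegree 3) (htf : G.CliqueFree 3)
    (hsq : G.EdgesOnTrianglesOrSquares) (L : G.IsLadder m u v) (hm : 2 ≤ m) {p q : V}
    (hp : G.Adj (u 0) p) (hpu : p ≠ u 1) (hpv : p ≠ v 0)
    (hq : G.Adj (v 0) q) (hqv : q ≠ v 1) (hqu : q ≠ u 0) : G.Adj p q := by
  have hNu0 : ∀ d, G.Adj (u 0) d → d = u 1 ∨ d = v 0 ∨ d = p :=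
    eq_or_eq_or_eq_of_adj (hG _) (L.adj_u 0 (by omega)) (L.rung 0 (by omega)) hp
      (L.u_ne_v _ (by omega) _ (by omega)) hpu.symm hpv.symm
  have hNv0 : ∀ d, G.Adj (v 0) d → d = v 1 ∨ d = u 0 ∨ d = q :=
    eq_or_eq_or_eq_of_adj (hG _) (L.adj_v 0 (by omega)) (L.rung 0 (by omega)).symm hq
      (L.u_ne_v _ (by omega) _ (by omega)).symm hqv.symm hqu.symm
  have hNu1 : ∀ d, G.Adj (u 1) d → d = u 0 ∨ d = u 2 ∨ d = v 1 := L.adj_u_succ hG (i := 0) hm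
  have hNv1 : ∀ d, G.Adj (v 1) d → d = v 0 ∨ d = v 2 ∨ d = u 1 := L.adj_v_succ hG (i := 0) hm
  have : G.Adj (u 0) (v 0) := L.rung 0 (by omega)
  have : G.Adj (u 1) (v 1) := L.rung 1 (by omega)
  have : G.Adj (u 2) (v 2) := L.rung 2 (by omega)
  have : G.Adj (u 0) (u 1) := L.adj_u 0 (by omega)
  have : G.Adj (u 1) (u 2) := L.adj_u 1 (by omega)
  have : G.Adj (v 0) (v 1) := L.adj_v 0 (by omega)
  have : G.Adj (v 1) (v 2) := L.adj_v 1 (by omega)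
  have hP : G.Adj p q ∨ p = v 2 ∨ G.Adj p (u 2) := by
    have htri := fun a b c => not_adj_of_cliqueFree_three htf (a := a) (b := b) (c := c)
    obtain ⟨a, b, ha, hb, hap, hbu, hab⟩ := hsq hp
    grind [G.adj_comm, SimpleGraph.irrefl, L.u_ne_u, L.v_ne_v, L.u_ne_v]
  have hQ : G.Adj q p ∨ q = u 2 ∨ G.Adj q (v 2) := by
    have htri := fun a b c => not_adj_of_cliqueFree_three htf (a := a) (b := b) (c := c)
    obtain ⟨a, b, ha, hb, haq, hbv, hab⟩ := hsq hq
    grind [G.adj_comm, SimpleGraph.irrefl, L.u_ne_u, L.v_ne_v, L.u_ne_v]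
  by_contra hpq
  have hpu2 : G.Adj p (u 2) := by grind [G.adj_comm]
  have hqv2 : G.Adj q (v 2) := by grind [G.adj_comm]
  rcases (by omega : m = 2 ∨ 3 ≤ m) with rfl | hm3
  · -- Now `u 2` and `v 2` are saturated as well, and the square through the third edge at
    -- `p` cannot close up.
    have hpv2 : p ≠ v 2 := by rintro rfl; exact hpq hqv2.symm
    have hqu2 : q ≠ u 2 := by rintro rfl; exact hpq hpu2
    have hNu2 : ∀ d, G.Adj (u 2) d → d = u 1 ∨ d = v 2 ∨ d = p :=
      eq_or_eq_or_eq_of_adj (hG _) (L.adj_u 1 (by omega)).symm (L.rung 2 (by omega)) hpu2.symm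
        (L.u_ne_v _ (by omega) _ (by omega)) hpu.symm hpv2.symm
    have hNv2 : ∀ d, G.Adj (v 2) d → d = v 1 ∨ d = u 2 ∨ d = q :=
      eq_or_eq_or_eq_of_adj (hG _) (L.adj_v 1 (by omega)).symm (L.rung 2 (by omega)).symm
        hqv2.symm (L.u_ne_v _ (by omega) _ (by omega)).symm hqv.symm hqu2.symm
    obtain ⟨r, hr, hru0, hru2, hNp⟩ := exists_adj_ne_ne (hG p) hp.symm hpu2
      (L.u_ne_u (i := 0) (j := 2) (by omega) (by omega) (by omega))
    obtain ⟨a, b, ha, hb, har, hbp, hab⟩ := hsq hr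
    grind [G.adj_comm, SimpleGraph.irrefl, L.u_ne_u, L.v_ne_v, L.u_ne_v]
  · have hNu2 : ∀ d, G.Adj (u 2) d → d = u 1 ∨ d = u 3 ∨ d = v 2 :=
      L.adj_u_succ hG (i := 1) (by omega)
    have hNv2 : ∀ d, G.Adj (v 2) d → d = v 1 ∨ d = v 3 ∨ d = u 2 :=
      L.adj_v_succ hG (i := 1) (by omega)
    have : G.Adj (u 3) (v 3) := L.rung 3 (by omega)
    rcases (by omega : m = 3 ∨ 4 ≤ m) with rfl | hm4
    · grind [G.adj_comm, SimpleGraph.irrefl, L.u_ne_u, L.v_ne_v, L.u_ne_v]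
    · have hNu3 : ∀ d, G.Adj (u 3) d → d = u 2 ∨ d = u 4 ∨ d = v 3 :=
        L.adj_u_succ hG (i := 2) (by omega)
      grind [G.adj_comm, SimpleGraph.irrefl, L.u_ne_u, L.v_ne_v, L.u_ne_v]

lemma extend_or_closed (hG : G.IsRegularOfDegree 3) (htf : G.CliqueFree 3)
    (hsq : G.EdgesOnTrianglesOrSquares) (L : G.IsLadder m u v) (hm : 2 ≤ m) :
    (∃ u' v', G.IsLadder (m + 1) u' v') ∨ (G.Adj (u m) (u 0) ∧ G.Adj (v m) (v 0)) ∨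
      (G.Adj (u m) (v 0) ∧ G.Adj (v m) (u 0)) := by
  obtain ⟨p, hp, hpu, hpv, -⟩ := exists_adj_ne_ne (hG _) (L.adj_u 0 (by omega))
    (L.rung 0 (by omega)) (L.u_ne_v _ (by omega) _ (by omega))
  obtain ⟨q, hq, hqv, hqu, -⟩ := exists_adj_ne_ne (hG _) (L.adj_v 0 (by omega))
    (L.rung 0 (by omega)).symm (L.u_ne_v _ (by omega) _ (by omega)).symm
  have hpq := L.adj_of_adj_u_zero_of_adj_v_zero hG htf hsq hm hp hpu hpv hq hqv hqu
  obtain ⟨k, rfl⟩ : ∃ k, m = k + 1 := ⟨m - 1, by omega⟩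
  -- The far-end vertices `u m`, `v m` have a single free slot.
  have hNum : ∀ {w}, G.Adj (u (k + 1)) w → w ≠ u k → w ≠ v (k + 1) →
      ∀ d, G.Adj (u (k + 1)) d → d = u k ∨ d = v (k + 1) ∨ d = w := fun hw hw1 hw2 =>
    eq_or_eq_or_eq_of_adj (hG _) (L.adj_u k (by omega)).symm (L.rung _ le_rfl) hw
      (L.u_ne_v _ (by omega) _ le_rfl) hw1.symm hw2.symm
  have hNvm : ∀ {w}, G.Adj (v (k + 1)) w → w ≠ v k → w ≠ u (k + 1) →
      ∀ d, G.Adj (v (k + 1)) d → d = v k ∨ d = u (k + 1) ∨ d = w := fun hw hw1 hw2 =>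
    eq_or_eq_or_eq_of_adj (hG _) (L.adj_v k (by omega)).symm (L.rung _ le_rfl).symm hw
      (L.u_ne_v _ le_rfl _ (by omega)).symm hw1.symm hw2.symm
  rcases L.eq_or_eq_or_notMem hG hp hpu hpv with rfl | rfl | hpL <;>
    rcases L.swap.eq_or_eq_or_notMem hG hq hqv hqu with rfl | rfl | hqL
  · exact Or.inr (Or.inl ⟨hp.symm, hq.symm⟩)
  · exact absurd hpq (G.irrefl)
  · have := hNum hp.symm (L.u_ne_u (by omega) (by omega) (by omega))
      (L.u_ne_v _ (by omega) _ (by omega)) _ hpq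
    grind
  · exact absurd hpq (G.irrefl)
  · exact Or.inr (Or.inr ⟨hq.symm, hp.symm⟩)
  · have := hNvm hp.symm (L.u_ne_v _ (by omega) _ (by omega))
      (L.u_ne_u (by omega) (by omega) (by omega)) _ hpq
    grind
  · have := hNvm hq.symm (L.v_ne_v (by omega) (by omega) (by omega))
      (L.u_ne_v _ (by omega) _ (by omega)).symm _ hpq.symm
    grind
  · have := hNum hq.symm (L.u_ne_v _ (by omega) _ (by omega)).symm
      (L.v_ne_v (by omega) (by omega) (by omega)) _ hpq.symm
    grind
  · exact Or.inl ⟨_, _, L.cons hp.symm hq.symm hpq hpL fun i hi => (hqL i hi).symm⟩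

/-- The longer ladder may grow off a different side of the square. -/
lemma exists_isLadder_two (hG : G.IsRegularOfDegree 3) (htf : G.CliqueFree 3)
    (hsq : G.EdgesOnTrianglesOrSquares) (L : G.IsLadder 1 u v) :
    ∃ u' v', G.IsLadder 2 u' v' := by
  have hu : G.Adj (u 0) (u 1) := L.adj_u 0 (by omega)
  have hv : G.Adj (v 0) (v 1) := L.adj_v 0 (by omega)
  have h0 := L.rung 0 (by omega); have h1 := L.rung 1 (by omega)
  have huu := L.u_ne_u (i := 0) (j := 1) (by omega) (by omega) (by omega)
  have hvv := L.v_ne_v (i := 0) (j := 1) (by omega) (by omega) (by omega)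
  have huv := L.u_ne_v 0 (by omega) 1 (by omega); have hvu := L.u_ne_v 1 (by omega) 0 (by omega)
  have hu0v1 := not_adj_of_cliqueFree_three htf h0 hv
  have hu1v0 := not_adj_of_cliqueFree_three htf hu.symm h0
  obtain ⟨p, hp, hpu, hpv, hNu0⟩ := exists_adj_ne_ne (hG _) hu h0 hvu
  obtain ⟨q, hq, hqv, hqu, hNv0⟩ := exists_adj_ne_ne (hG _) hv h0.symm huv.symm
  obtain ⟨t, ht, htu, htv, hNu1⟩ := exists_adj_ne_ne (hG _) hu.symm h1 huv
  have hu0t := not_adj_of_cliqueFree_three htf hu ht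
  have hu0q := not_adj_of_cliqueFree_three htf h0 hq
  have hv0p := not_adj_of_cliqueFree_three htf h0.symm hp
  by_cases hpq : G.Adj p q
  · refine ⟨_, _, L.cons hp.symm hq.symm hpq (fun i hi => ?_) (fun i hi => ?_)⟩ <;>
      interval_cases i <;> grind [G.adj_comm, SimpleGraph.irrefl]
  have hpt : G.Adj p (v 1) ∨ G.Adj p t := by
    obtain ⟨a, b, ha, hb, hap, hbu, hab⟩ := hsq hp
    grind [G.adj_comm, SimpleGraph.irrefl]
  rcases hpt with hpv1 | hpt
  · -- Then `u 0` and `v 1` have the same neighbours, and so do `v 0` and `u 1`: the square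
    -- through the third edge at `p` forces `p ~ q`.
    have hNv1 : ∀ d, G.Adj (v 1) d → d = v 0 ∨ d = u 1 ∨ d = p :=
      eq_or_eq_or_eq_of_adj (hG _) hv.symm h1.symm hpv1.symm hvu.symm hpv.symm hpu.symm
    have hqt : q = t := by
      obtain ⟨a, b, ha, hb, haq, hbv, hab⟩ := hsq hq
      grind [G.adj_comm, SimpleGraph.irrefl]
    subst hqt
    obtain ⟨r, hr, hru, hrv, hNp⟩ := exists_adj_ne_ne (hG p) hp.symm hpv1 huv
    obtain ⟨a, b, ha, hb, har, hbp, hab⟩ := hsq hr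
    grind [G.adj_comm, SimpleGraph.irrefl]
  · refine ⟨_, _, ((IsLadder.zero hv).cons h0 h1 hu (fun i hi => ?_) (fun i hi => ?_)).cons
      hp.symm ht.symm hpt (fun i hi => ?_) (fun i hi => ?_)⟩ <;>
      interval_cases i <;> grind [G.adj_comm, SimpleGraph.irrefl]

lemma nonempty_iso_prismGraph (hconn : G.Connected) (hG : G.IsRegularOfDegree 3)
    (L : G.IsLadder m u v) (hm : 2 ≤ m) (hu : G.Adj (u m) (u 0)) (hv : G.Adj (v m) (v 0)) :
    Nonempty (G ≃g prismGraph (m + 1)) := by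
  let f : ZMod (m + 1) × Bool → V := fun p => cond p.2 (v p.1.val) (u p.1.val)
  have hval : ∀ i : ZMod (m + 1), i.val ≤ m := fun i => Nat.lt_succ_iff.1 (ZMod.val_lt i)
  have hrel : ∀ p q : ZMod (m + 1) × Bool,
      (p.2 = q.2 ∧ q.1 = p.1 + 1) ∨ (p.1 = q.1 ∧ p.2 ≠ q.2) → G.Adj (f p) (f q) := by
    rintro ⟨i, b⟩ ⟨j, c⟩ (⟨rfl, rfl⟩ | ⟨rfl, hbc⟩)
    · cases b
      · exact adj_val_add_one (N := m + 1) (by omega) (fun j hj => L.adj_u j (by omega)) hu i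
      · exact adj_val_add_one (N := m + 1) (by omega) (fun j hj => L.adj_v j (by omega)) hv i
    · cases b <;> cases c <;> simp only [ne_eq, not_true_eq_false] at hbc
      · exact L.rung _ (hval i)
      · exact (L.rung _ (hval i)).symm
  have hom : ∀ {p q}, (prismGraph (m + 1)).Adj p q → G.Adj (f p) (f q) := fun h => by
    obtain ⟨-, h | h⟩ := (fromRel_adj _ _ _).1 h
    exacts [hrel _ _ h, (hrel _ _ h).symm]
  have hf : Function.Injective f := by
    rintro ⟨i, b⟩ ⟨j, c⟩ h
    cases b <;> cases c <;> simp only [f, cond_false, cond_true] at h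
    · rw [ZMod.val_injective _ (L.injOn_u (hval i) (hval j) h)]
    · exact absurd h (L.u_ne_v _ (hval i) _ (hval j))
    · exact absurd h.symm (L.u_ne_v _ (hval j) _ (hval i))
    · rw [ZMod.val_injective _ (L.injOn_v (hval i) (hval j) h)]
  exact nonempty_iso_of_injective_of_degree_le hconn ⟨f, hom⟩ hf
    fun p => (hG _).trans_le (prismGraph_three_le_degree (by omega) p)

/-- Reading the twisted ladder as the cycle `u 0 … u m v 0 … v m`, the rungs join
antipodal vertices. -/
lemma nonempty_iso_mobiusLadder (hconn : G.Connected) (hG : G.IsRegularOfDegree 3)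
    (L : G.IsLadder m u v) (hm : 1 ≤ m) (hu : G.Adj (u m) (v 0)) (hv : G.Adj (v m) (u 0)) :
    Nonempty (G ≃g mobiusLadder (m + 1)) := by
  have : NeZero (2 * (m + 1)) := ⟨by omega⟩
  let g : ℕ → V := fun t => if t ≤ m then u t else v (t - (m + 1))
  have hg_lo : ∀ t ≤ m, g t = u t := fun t ht => if_pos ht
  have hg_hi : ∀ t, m < t → g t = v (t - (m + 1)) := fun t ht => if_neg (by omega)
  have hcycle : ∀ j, j + 1 < 2 * (m + 1) → G.Adj (g j) (g (j + 1)) := by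
    intro j hj
    rcases lt_trichotomy j m with h | rfl | h
    · rw [hg_lo _ h.le, hg_lo _ h]; exact L.adj_u j h
    · rw [hg_lo _ le_rfl, hg_hi _ (by omega), Nat.sub_self]; exact hu
    · rw [hg_hi _ h, hg_hi _ (by omega), show j + 1 - (m + 1) = j - (m + 1) + 1 by omega]
      exact L.adj_v _ (by omega)
  have hrung : ∀ i : ZMod (2 * (m + 1)), G.Adj (g i.val) (g (i + ((m + 1 : ℕ) : ZMod _)).val) := by
    intro i
    have hi := ZMod.val_lt i
    rw [ZMod.val_add, ZMod.val_natCast_of_lt (by omega)]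
    by_cases h : i.val ≤ m
    · rw [Nat.mod_eq_of_lt (by omega), hg_lo _ h, hg_hi _ (by omega), Nat.add_sub_cancel]
      exact L.rung _ h
    · rw [Nat.mod_eq_sub_mod (by omega), Nat.mod_eq_of_lt (by omega),
        show i.val + (m + 1) - 2 * (m + 1) = i.val - (m + 1) by omega, hg_hi _ (by omega),
        hg_lo _ (by omega)]
      exact (L.rung _ (by omega)).symm
  let f : ZMod (2 * (m + 1)) → V := fun i => g i.val
  have hclose : G.Adj (g (2 * (m + 1) - 1)) (g 0) := by
    rw [hg_hi _ (by omega), hg_lo _ (by omega), show 2 * (m + 1) - 1 - (m + 1) = m by omega]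
    exact hv
  have hom : ∀ {p q}, (mobiusLadder (m + 1)).Adj p q → G.Adj (f p) (f q) := by
    have hrel : ∀ p q : ZMod (2 * (m + 1)), q = p + 1 ∨ q = p + ((m + 1 : ℕ) : ZMod _) →
        G.Adj (f p) (f q) := by
      rintro p q (rfl | rfl)
      exacts [adj_val_add_one (by omega) hcycle hclose p, hrung p]
    intro p q h
    obtain ⟨-, h | h⟩ := (fromRel_adj _ _ _).1 h
    exacts [hrel _ _ h, (hrel _ _ h).symm]
  have hf : Function.Injective f := by
    intro i j h
    have hi := ZMod.val_lt i
    have hj := ZMod.val_lt j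
    apply ZMod.val_injective
    simp only [f, g] at h
    split_ifs at h with h1 h2 h2
    · exact L.injOn_u h1 h2 h
    · exact absurd h (L.u_ne_v _ h1 _ (by omega))
    · exact absurd h.symm (L.u_ne_v _ h2 _ (by omega))
    · have := L.injOn_v (Set.mem_Iic.2 (by omega)) (Set.mem_Iic.2 (by omega)) h
      omega
  exact nonempty_iso_of_injective_of_degree_le hconn ⟨f, hom⟩ hf
    fun p => (hG _).trans_le (mobiusLadder_three_le_degree (by omega) p)

end IsLadder

end SimpleGraph

/-! ### Graphs all of whose edges lie on triangles or squares -/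

namespace SimpleGraph

variable {G : SimpleGraph V}

def IsPrismOrMobiusLadder (G : SimpleGraph V) : Prop :=
  (∃ n : ℕ, 3 ≤ n ∧ Nonempty (G ≃g prismGraph n)) ∨
    (∃ k : ℕ, 2 ≤ k ∧ Nonempty (G ≃g mobiusLadder k))

variable [∀ v, Fintype (G.neighborSet v)]

theorem IsLadder.isPrismOrMobiusLadder [Fintype V] (hconn : G.Connected)
    (hG : G.IsRegularOfDegree 3) (htf : G.CliqueFree 3) (hsq : G.EdgesOnTrianglesOrSquares)
    {m : ℕ} {u v : ℕ → V} (L : G.IsLadder m u v) (hm : 2 ≤ m) : G.IsPrismOrMobiusLadder := by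
  rcases L.extend_or_closed hG htf hsq hm with ⟨u', v', L'⟩ | ⟨hu, hv⟩ | ⟨hu, hv⟩
  · have := L'.card_le
    exact L'.isPrismOrMobiusLadder hconn hG htf hsq (by omega)
  · exact Or.inl ⟨m + 1, by omega, L.nonempty_iso_prismGraph hconn hG hm hu hv⟩
  · exact Or.inr ⟨m + 1, by omega, L.nonempty_iso_mobiusLadder hconn hG (by omega) hu hv⟩
termination_by Fintype.card V - m

theorem isPrismOrMobiusLadder_of_cliqueFree [Fintype V] (hconn : G.Connected)
    (hG : G.IsRegularOfDegree 3) (htf : G.CliqueFree 3) (hsq : G.EdgesOnTrianglesOrSquares) :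
    G.IsPrismOrMobiusLadder := by
  obtain ⟨x⟩ := hconn.nonempty
  obtain ⟨y, hxy⟩ := (G.degree_pos_iff_exists_adj x).1 (by rw [hG x]; norm_num)
  obtain ⟨a, b, hxa, hyb, hay, hbx, hab⟩ := hsq hxy
  have hab : G.Adj a b := hab.resolve_left fun h =>
    not_adj_of_cliqueFree_three htf hxy hyb (h ▸ hxa)
  have L := (IsLadder.zero hxy).cons hxa.symm hyb.symm hab (fun _ _ => ⟨hxa.ne', hay⟩)
    (fun _ _ => ⟨hbx, hyb.ne'⟩)
  obtain ⟨u, v, L⟩ := L.exists_isLadder_two hG htf hsq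
  exact L.isPrismOrMobiusLadder hconn hG htf hsq le_rfl

/-- The vertex `w` is then adjacent to the third neighbour `z'` of `z` as well, and the vertices
`x, y, z, w, z'` are left only through the third edge at `z'`, which lies on no triangle or
square. -/
lemma false_of_triangle_of_common_neighbor (hG : G.IsRegularOfDegree 3)
    (hsq : G.EdgesOnTrianglesOrSquares) {x y z w z' : V} (hxy : G.Adj x y) (hyz : G.Adj y z)
    (hxz : G.Adj x z) (hxw : G.Adj x w) (hyw : G.Adj y w) (hwz : w ≠ z) (hzz' : G.Adj z z')
    (hz'x : z' ≠ x) (hz'y : z' ≠ y) (hz'w : z' ≠ w) : False := by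
  have hNx : ∀ d, G.Adj x d → d = y ∨ d = z ∨ d = w :=
    eq_or_eq_or_eq_of_adj (hG x) hxy hxz hxw hyz.ne hyw.ne hwz.symm
  have hNy : ∀ d, G.Adj y d → d = x ∨ d = z ∨ d = w :=
    eq_or_eq_or_eq_of_adj (hG y) hxy.symm hyz hyw hxz.ne hxw.ne hwz.symm
  have hNz : ∀ d, G.Adj z d → d = x ∨ d = y ∨ d = z' :=
    eq_or_eq_or_eq_of_adj (hG z) hxz.symm hyz.symm hzz' hxy.ne hz'x.symm hz'y.symm
  have hwz' : G.Adj w z' := by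
    obtain ⟨a, b, ha, hb, haz', hbz, hab⟩ := hsq hzz'
    grind [G.adj_comm, SimpleGraph.irrefl]
  have hNw : ∀ d, G.Adj w d → d = x ∨ d = y ∨ d = z' :=
    eq_or_eq_or_eq_of_adj (hG w) hxw.symm hyw.symm hwz' hxy.ne hz'x.symm hz'y.symm
  obtain ⟨r, hr, hrz, hrw, hNz'⟩ := exists_adj_ne_ne (hG z') hzz'.symm hwz'.symm hwz.symm
  obtain ⟨a, b, ha, hb, har, hbz', hab⟩ := hsq hr
  grind [G.adj_comm, SimpleGraph.irrefl]

/-- If not, `z'` is adjacent to both `x'` and `y'`; the square through the third edge `x' p`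
forces `p ~ y'`, and then the third edge at `p` lies on no triangle or square. -/
lemma adj_of_triangle (hG : G.IsRegularOfDegree 3) (hsq : G.EdgesOnTrianglesOrSquares)
    {x y z x' y' z' : V} (hxy : G.Adj x y) (hyz : G.Adj y z) (hxz : G.Adj x z)
    (hxx' : G.Adj x x') (hx'y : x' ≠ y) (hx'z : x' ≠ z)
    (hyy' : G.Adj y y') (hy'x : y' ≠ x) (hy'z : y' ≠ z)
    (hzz' : G.Adj z z') (hz'x : z' ≠ x) (hz'y : z' ≠ y)
    (hx'y' : x' ≠ y') (hx'z' : x' ≠ z') (hy'z' : y' ≠ z') : G.Adj x' y' := by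
  have hNx : ∀ d, G.Adj x d → d = y ∨ d = z ∨ d = x' :=
    eq_or_eq_or_eq_of_adj (hG x) hxy hxz hxx' hyz.ne hx'y.symm hx'z.symm
  have hNy : ∀ d, G.Adj y d → d = x ∨ d = z ∨ d = y' :=
    eq_or_eq_or_eq_of_adj (hG y) hxy.symm hyz hyy' hxz.ne hy'x.symm hy'z.symm
  have hNz : ∀ d, G.Adj z d → d = x ∨ d = y ∨ d = z' :=
    eq_or_eq_or_eq_of_adj (hG z) hxz.symm hyz.symm hzz' hxy.ne hz'x.symm hz'y.symm
  have hx' : G.Adj x' y' ∨ G.Adj x' z' := by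
    obtain ⟨a, b, ha, hb, hax', hbx, hab⟩ := hsq hxx'
    grind [G.adj_comm, SimpleGraph.irrefl]
  have hy' : G.Adj y' x' ∨ G.Adj y' z' := by
    obtain ⟨a, b, ha, hb, hay', hby, hab⟩ := hsq hyy'
    grind [G.adj_comm, SimpleGraph.irrefl]
  by_contra hxy'
  have hx'z'' : G.Adj x' z' := hx'.resolve_left hxy'
  have hy'z'' : G.Adj y' z' := hy'.resolve_left fun h => hxy' h.symm
  have hNz' : ∀ d, G.Adj z' d → d = z ∨ d = x' ∨ d = y' :=
    eq_or_eq_or_eq_of_adj (hG z') hzz'.symm hx'z''.symm hy'z''.symm hx'z.symm hy'z.symm hx'y'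
  obtain ⟨p, hp, hpx, hpz', hNx'⟩ := exists_adj_ne_ne (hG x') hxx'.symm hx'z'' hz'x.symm
  have hpy' : G.Adj p y' := by
    obtain ⟨a, b, ha, hb, hap, hbx', hab⟩ := hsq hp
    grind [G.adj_comm, SimpleGraph.irrefl]
  have hNy' : ∀ d, G.Adj y' d → d = y ∨ d = z' ∨ d = p :=
    eq_or_eq_or_eq_of_adj (hG y') hyy'.symm hy'z'' hpy'.symm hz'y.symm
      (by grind [G.adj_comm, SimpleGraph.irrefl]) (by grind [G.adj_comm, SimpleGraph.irrefl])
  obtain ⟨s, hs, hsx', hsy', hNp⟩ := exists_adj_ne_ne (hG p) hp.symm hpy' hx'y'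
  obtain ⟨a, b, ha, hb, has, hbp, hab⟩ := hsq hs
  grind [G.adj_comm, SimpleGraph.irrefl]

theorem isPrismOrMobiusLadder_of_triangle (hconn : G.Connected) (hG : G.IsRegularOfDegree 3)
    (hsq : G.EdgesOnTrianglesOrSquares) {x y z : V} (hxy : G.Adj x y) (hyz : G.Adj y z)
    (hxz : G.Adj x z) : G.IsPrismOrMobiusLadder := by
  obtain ⟨x', hxx', hx'y, hx'z, -⟩ := exists_adj_ne_ne (hG x) hxy hxz hyz.ne
  obtain ⟨y', hyy', hy'x, hy'z, -⟩ := exists_adj_ne_ne (hG y) hxy.symm hyz hxz.ne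
  obtain ⟨z', hzz', hz'x, hz'y, -⟩ := exists_adj_ne_ne (hG z) hxz.symm hyz.symm hxy.ne
  by_cases e1 : x' = y' <;> by_cases e2 : x' = z'
  · subst e1 e2
    have L := (IsLadder.zero hxz).cons hxy.symm hzz'.symm hyy' (fun _ _ => ⟨hxy.ne', hyz.ne⟩)
      (fun _ _ => ⟨hy'x, hy'z⟩)
    exact Or.inr ⟨2, le_rfl, L.nonempty_iso_mobiusLadder hconn hG le_rfl hxx' hyz.symm⟩
  · subst e1
    exact (false_of_triangle_of_common_neighbor hG hsq hxy hyz hxz hxx' hyy' hx'z hzz' hz'x hz'y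
      (Ne.symm e2)).elim
  · subst e2
    exact (false_of_triangle_of_common_neighbor hG hsq hxz hyz.symm hxy hxx' hzz' hx'y hyy' hy'x
      hy'z (Ne.symm e1)).elim
  by_cases e3 : y' = z'
  · subst e3
    exact (false_of_triangle_of_common_neighbor hG hsq hyz hxz.symm hxy.symm hyy' hzz' hy'x hxx'
      hx'y hx'z e1).elim
  have hx'y' := adj_of_triangle hG hsq hxy hyz hxz hxx' hx'y hx'z hyy' hy'x hy'z hzz' hz'x hz'y
    e1 e2 e3
  have hy'z' := adj_of_triangle hG hsq hyz hxz.symm hxy.symm hyy' hy'z hy'x hzz' hz'y hz'x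
    hxx' hx'y hx'z e3 (Ne.symm e1) (Ne.symm e2)
  have hx'z' := adj_of_triangle hG hsq hxz hyz.symm hxy hxx' hx'z hx'y hzz' hz'x hz'y
    hyy' hy'x hy'z e2 e1 (Ne.symm e3)
  have L := ((IsLadder.zero hzz').cons hyz hy'z' hyy' (fun _ _ => ⟨hyz.ne, hz'y.symm⟩)
    (fun _ _ => ⟨hy'z, e3⟩)).cons hxy hx'y' hxx' (fun i hi => ?_) (fun i hi => ?_)
  · exact Or.inl ⟨3, le_rfl, L.nonempty_iso_prismGraph hconn hG le_rfl hxz.symm hx'z'.symm⟩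
  all_goals interval_cases i <;> grind [SimpleGraph.irrefl]

end SimpleGraph

/-- A (finite, connected) simple 3-regular graph has `κ₀(x,y) ≥ 0` on
every edge iff it is isomorphic to a prism graph `Y n` with `n ≥ 3` or to a Möbius
ladder `M k` with `k ≥ 2`. -/
theorem cubic_ollivier_nonneg_iff_prism_or_mobius {V : Type*} [Fintype V]
    (G : SimpleGraph V) [∀ v, Fintype (G.neighborSet v)]
    (hconn : G.Connected) (hcubic : ∀ v : V, G.degree v = 3) :
    (∀ x y : V, G.Adj x y → 0 ≤ kappaZero G x y) ↔
      ((∃ n : ℕ, 3 ≤ n ∧ Nonempty (G ≃g prismGraph n)) ∨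
        (∃ k : ℕ, 2 ≤ k ∧ Nonempty (G ≃g mobiusLadder k))) := by
  have hκ : (∀ x y : V, G.Adj x y → 0 ≤ kappaZero G x y) ↔ G.EdgesOnTrianglesOrSquares :=
    forall₂_congr fun _ _ => forall_congr' (kappaZero_nonneg_iff hconn hcubic)
  rw [hκ]
  refine ⟨fun hsq => ?_, ?_⟩
  · by_cases htf : G.CliqueFree 3
    · exact isPrismOrMobiusLadder_of_cliqueFree hconn hcubic htf hsq
    · classical
      obtain ⟨t, ht⟩ := not_forall_not.1 htf
      obtain ⟨x, y, z, hxy, hxz, hyz, -⟩ := is3Clique_iff.1 ht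
      exact isPrismOrMobiusLadder_of_triangle hconn hcubic hsq hxy hyz hxz
  · rintro (⟨n, hn, ⟨e⟩⟩ | ⟨k, hk, ⟨e⟩⟩)
    exacts [(edgesOnTrianglesOrSquares_prismGraph (by omega)).of_iso e,
      (edgesOnTrianglesOrSquares_mobiusLadder hk).of_iso e]
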